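/- Let n ≥ 3 and let p be a complex number with p ≠ 0 and p⁴ ≠ 1; set q = p². Let J_1, …, J_{n−1} be linear endomorphisms of a complex vector space V satisfying the U′_q(so_n) relations, and let V_1, …, V_n be linear endomorphisms of V forming a vector operator, i.e. p V_j J_j − p⁻¹ J_j V_j = V_{j+1} and p J_j V_{j+1} − p⁻¹ V_{j+1} J_j = V_j for j = 1, …, n−1, and J_j V_k = V_k J_j whenever k ∉ {j, j+1}. Then the linear map Φ : ℂⁿ ⊗ V → V determined by Φ(v_k ⊗ w) = V_k w intertwines the tensor-product action with the action on V: Φ ∘ J⊗_j = J_j ∘ Φ for all j = 1, …, n−1, where J⊗_j is defined on ℂⁿ ⊗ V by J⊗_j (v_j ⊗ w) = q (v_j ⊗ J_j w) − p (v_{j+1} ⊗ w), J⊗_j (v_{j+1} ⊗ w) = q⁻¹ (v_{j+1} ⊗ J_j w) + p⁻¹ (v_j ⊗ w), J⊗_j (v_k ⊗ w) = v_k ⊗ J_j w for k ∉ {j, j+1}. -/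
import Mathlib


open TensorProduct

/-- The `U'_q(so_n)` relations for operators `I 1, …, I (n-1)` on a complex vector space. -/
def IsUqSon {V : Type*} [AddCommGroup V] [Module ℂ V] (n : ℕ) (q : ℂ)
    (I : ℕ → Module.End ℂ V) : Prop :=
  (∀ j, 2 ≤ j → j ≤ n - 1 →
    (I j ^ 2 * I (j - 1) + I (j - 1) * I j ^ 2
        - (q + q⁻¹) • (I j * I (j - 1) * I j) = -I (j - 1)) ∧
    (I (j - 1) ^ 2 * I j + I j * I (j - 1) ^ 2
        - (q + q⁻¹) • (I (j - 1) * I j * I (j - 1)) = -I j)) ∧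
  (∀ i j, 1 ≤ i → i ≤ n - 1 → 1 ≤ j → j ≤ n - 1 → (i + 1 < j ∨ j + 1 < i) →
    I i * I j = I j * I i)

/-- The standard basis vector `v_k` (`1 ≤ k ≤ n`, one-based) of `ℂⁿ`;
out-of-range indices give `0`. -/
noncomputable def stdv (n k : ℕ) : Fin n → ℂ :=
  if h : 1 ≤ k ∧ k ≤ n then Pi.single (⟨k - 1, by omega⟩ : Fin n) 1 else 0

/-- **Vector operators intertwine the tensor-product action.**  With `q = p²`
(`p ≠ 0`, `p⁴ ≠ 1`), let `J_1, …, J_{n-1}` satisfy the `U'_q(so_n)` relations on `V` and let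
`V_1, …, V_n` be a vector operator: `p V_j J_j - p⁻¹ J_j V_j = V_{j+1}`,
`p J_j V_{j+1} - p⁻¹ V_{j+1} J_j = V_j`, and `J_j V_k = V_k J_j` for `k ∉ {j, j+1}`.
Then the linear map `Φ : ℂⁿ ⊗ V → V`, `Φ(v_k ⊗ w) = V_k w`, satisfies
`Φ ∘ J⊗_j = J_j ∘ Φ` where `J⊗_j` is the tensor-product action
`J⊗_j (v_j ⊗ w) = q v_j ⊗ J_j w - p v_{j+1} ⊗ w`,
`J⊗_j (v_{j+1} ⊗ w) = q⁻¹ v_{j+1} ⊗ J_j w + p⁻¹ v_j ⊗ w`,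
`J⊗_j (v_k ⊗ w) = v_k ⊗ J_j w` for `k ∉ {j, j+1}`. -/
theorem stmt_7 {V : Type*} [AddCommGroup V] [Module ℂ V]
    (n : ℕ) (hn : 3 ≤ n) (p : ℂ) (hp : p ≠ 0) (hp4 : p ^ 4 ≠ 1)
    (J : ℕ → Module.End ℂ V) (hJ : IsUqSon n (p ^ 2) J)
    (Vop : ℕ → Module.End ℂ V)
    (hVop1 : ∀ j, 1 ≤ j → j ≤ n - 1 →
      p • (Vop j * J j) - p⁻¹ • (J j * Vop j) = Vop (j + 1) ∧
      p • (J j * Vop (j + 1)) - p⁻¹ • (Vop (j + 1) * J j) = Vop j)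
    (hVop2 : ∀ j k, 1 ≤ j → j ≤ n - 1 → 1 ≤ k → k ≤ n → k ≠ j → k ≠ j + 1 →
      J j * Vop k = Vop k * J j)
    (Jt : ℕ → Module.End ℂ ((Fin n → ℂ) ⊗[ℂ] V))
    (hJt1 : ∀ j, 1 ≤ j → j ≤ n - 1 → ∀ w : V,
      Jt j (stdv n j ⊗ₜ[ℂ] w)
        = (p ^ 2) • (stdv n j ⊗ₜ[ℂ] J j w) - p • (stdv n (j + 1) ⊗ₜ[ℂ] w))
    (hJt2 : ∀ j, 1 ≤ j → j ≤ n - 1 → ∀ w : V,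
      Jt j (stdv n (j + 1) ⊗ₜ[ℂ] w)
        = (p ^ 2)⁻¹ • (stdv n (j + 1) ⊗ₜ[ℂ] J j w) + p⁻¹ • (stdv n j ⊗ₜ[ℂ] w))
    (hJt3 : ∀ j k, 1 ≤ j → j ≤ n - 1 → 1 ≤ k → k ≤ n → k ≠ j → k ≠ j + 1 →
      ∀ w : V, Jt j (stdv n k ⊗ₜ[ℂ] w) = stdv n k ⊗ₜ[ℂ] J j w)
    (Φ : ((Fin n → ℂ) ⊗[ℂ] V) →ₗ[ℂ] V)
    (hΦ : ∀ k, 1 ≤ k → k ≤ n → ∀ w : V, Φ (stdv n k ⊗ₜ[ℂ] w) = Vop k w) :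
    ∀ j, 1 ≤ j → j ≤ n - 1 → Φ ∘ₗ (Jt j : ((Fin n → ℂ) ⊗[ℂ] V) →ₗ[ℂ] ((Fin n → ℂ) ⊗[ℂ] V))
      = (J j : V →ₗ[ℂ] V) ∘ₗ Φ := by
  intro j hj1 hj2
  have hjn : j + 1 ≤ n := by omega
  have key : ∀ (k : ℕ), 1 ≤ k → k ≤ n → ∀ w : V,
      Φ (Jt j (stdv n k ⊗ₜ[ℂ] w)) = J j (Φ (stdv n k ⊗ₜ[ℂ] w)) := by
    intro k hk1 hk2 w
    rcases eq_or_ne k j with h | hkj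
    · subst h
      rw [hJt1 k hj1 hj2 w, map_sub, map_smul, map_smul, hΦ k hk1 (by omega),
        hΦ (k+1) (by omega) (by omega), hΦ k hk1 (by omega)]
      have h := congrArg (fun (T : Module.End ℂ V) => T w) (hVop1 k hj1 hj2).1
      simp only [LinearMap.smul_apply, LinearMap.sub_apply, Module.End.mul_apply] at h
      rw [← h, smul_sub, smul_smul, smul_smul, mul_inv_cancel₀ hp, one_smul, pow_two]
      abel
    · rcases eq_or_ne k (j+1) with h | hkj1
      · subst h
        rw [hJt2 j hj1 hj2 w, map_add, map_smul, map_smul, hΦ (j+1) hk1 hk2,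
          hΦ j hj1 (by omega), hΦ (j+1) hk1 hk2]
        have h := congrArg (fun (T : Module.End ℂ V) => T w) (hVop1 j hj1 hj2).2
        simp only [LinearMap.smul_apply, LinearMap.sub_apply, Module.End.mul_apply] at h
        rw [← h, smul_sub, smul_smul, smul_smul, inv_mul_cancel₀ hp, one_smul,
          show p⁻¹ * p⁻¹ = (p^2)⁻¹ by rw [pow_two, mul_inv]]
        abel
      · rw [hJt3 j k hj1 hj2 hk1 hk2 hkj hkj1 w, hΦ k hk1 hk2, hΦ k hk1 hk2]
        have h := congrArg (fun (T : Module.End ℂ V) => T w)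
          (hVop2 j k hj1 hj2 hk1 hk2 hkj hkj1)
        simpa [Module.End.mul_apply] using h.symm
  apply TensorProduct.ext'
  intro x w
  have hstd : ∀ i : Fin n, stdv n (i.1 + 1) = Pi.single i 1 := by
    intro i
    rw [stdv, dif_pos ⟨Nat.le_add_left 1 _, i.isLt⟩]
    exact congrArg (fun m => Pi.single m 1) (Fin.ext (show i.1 + 1 - 1 = i.1 by omega))
  have hx : x = ∑ i : Fin n, x i • stdv n (i.1 + 1) := by
    simp only [hstd]
    conv_lhs => rw [pi_eq_sum_univ x]
    refine Finset.sum_congr rfl fun i _ => ?_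
    congr 1
    funext j'
    simp [Pi.single_apply, eq_comm]
  rw [LinearMap.comp_apply, LinearMap.comp_apply, hx, TensorProduct.sum_tmul]
  simp only [map_sum]
  refine Finset.sum_congr rfl fun i _ => ?_
  rw [← TensorProduct.smul_tmul']
  simp only [map_smul]
  rw [key (i.1 + 1) (by omega) i.isLt w]
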